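/- For discrete random variables G, Y, Z, the mutual information I(G;Z) equals H(G) - L_CE + D_KL(p_{YZ}‖p_Y p_Z) + D_KL(p_Y‖p_Z) + H(Y|G,Z) - H(G|Y,Z), where L_CE = H(p_Y, p_Z) is the cross-entropy of p_Y relative to p_Z. In particular, holding the other five terms fixed, I(G;Z) is strictly decreasing in L_CE. -/

import Mathlib

/-!
Every term of the identity is a combination of the negentropies `∑ q log q` of the joint law of
`(G, Y, Z)` and of its marginals on `G`, `Y`, `Z`, `(G, Z)`, `(Y, Z)`, together with the cross term
`∑ p_Y log p_Z = -L_CE`. Expanding `log (a / b) = log a - log b` (legitimate because a marginal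
vanishes only where the joint law does) and collecting, both sides reduce to
`H(G) + ∑ p_{GZ} log p_{GZ} - ∑ p_Z log p_Z`.
-/

open Finset Real

lemma mul_log_div_of_imp_ne_zero {a b : ℝ} (h : a ≠ 0 → b ≠ 0) :
    a * log (a / b) = a * log a - a * log b := by
  rcases eq_or_ne a 0 with rfl | ha
  · simp
  · rw [log_div ha (h ha)]; ring

lemma imp_ne_zero_of_nonneg_of_le {a b : ℝ} (ha : 0 ≤ a) (hab : a ≤ b) : a ≠ 0 → b ≠ 0 :=
  fun h => ((ha.lt_of_ne' h).trans_le hab).ne'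

lemma le_of_marginal {ι κ : Type*} [Fintype ι] {f : ι → κ → ℝ} {m : κ → ℝ}
    (hf : ∀ i k, 0 ≤ f i k) (hm : ∀ k, m k = ∑ i, f i k) (i : ι) (k : κ) : f i k ≤ m k :=
  hm k ▸ single_le_sum (fun j _ => hf j k) (mem_univ i)

section Marginal

variable {ι κ : Type*} [Fintype ι] [Fintype κ] {f : ι → κ → ℝ} {m : κ → ℝ}

lemma sum_sum_mul_log_of_marginal (hm : ∀ k, m k = ∑ i, f i k) :
    ∑ i, ∑ k, f i k * log (m k) = ∑ k, m k * log (m k) := by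
  rw [sum_comm]
  exact sum_congr rfl fun k _ => by rw [← sum_mul, hm]

/-- Chain rule in negentropy form: `-H(I | K) = -H(I, K) + H(K)`. -/
lemma sum_sum_mul_log_div_of_marginal (hf : ∀ i k, 0 ≤ f i k) (hm : ∀ k, m k = ∑ i, f i k) :
    ∑ i, ∑ k, f i k * log (f i k / m k)
      = ∑ i, ∑ k, f i k * log (f i k) - ∑ k, m k * log (m k) := by
  have hsplit : ∀ i k, f i k * log (f i k / m k) = f i k * log (f i k) - f i k * log (m k) :=
    fun i k => mul_log_div_of_imp_ne_zero
      (imp_ne_zero_of_nonneg_of_le (hf i k) (le_of_marginal hf hm i k))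
  simp only [hsplit, sum_sub_distrib, sum_sum_mul_log_of_marginal hm]

/-- Mutual information in negentropy form: `I(I; K) = -H(I) - H(K) + H(I, K)`. -/
lemma sum_sum_mul_log_div_mul_of_marginals (hf : ∀ i k, 0 ≤ f i k)
    {n : ι → ℝ} (hn : ∀ i, n i = ∑ k, f i k) (hm : ∀ k, m k = ∑ i, f i k) :
    ∑ i, ∑ k, f i k * log (f i k / (n i * m k))
      = ∑ i, ∑ k, f i k * log (f i k) - ∑ i, n i * log (n i) - ∑ k, m k * log (m k) := by
  have hsplit : ∀ i k, f i k * log (f i k / (n i * m k))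
      = f i k * log (f i k / m k) - f i k * log (n i) := fun i k => by
    rcases eq_or_ne (f i k) 0 with h | h
    · simp [h]
    have hni : n i ≠ 0 :=
      imp_ne_zero_of_nonneg_of_le (hf i k) (le_of_marginal (fun k i => hf i k) hn k i) h
    have hmk : m k ≠ 0 := imp_ne_zero_of_nonneg_of_le (hf i k) (le_of_marginal hf hm i k) h
    rw [log_div h (mul_ne_zero hni hmk), log_div h hmk, log_mul hni hmk]
    ring
  have hn_log : ∑ i, ∑ k, f i k * log (n i) = ∑ i, n i * log (n i) :=
    sum_congr rfl fun i _ => by rw [← sum_mul, hn]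
  simp only [hsplit, sum_sub_distrib, hn_log, sum_sum_mul_log_div_of_marginal hf hm]
  ring

end Marginal

/-- `D(p ‖ q) = H(p, q) - H(p)`. -/
lemma sum_mul_log_div_eq_sub {ι : Type*} [Fintype ι] {p q : ι → ℝ} (hp : ∀ i, 0 ≤ p i)
    (hpq : ∀ i, 0 < p i → 0 < q i) :
    ∑ i, p i * log (p i / q i) = ∑ i, p i * log (p i) - ∑ i, p i * log (q i) := by
  rw [← sum_sub_distrib]
  exact sum_congr rfl fun i _ => mul_log_div_of_imp_ne_zero fun h =>
    (hpq i ((hp i).lt_of_ne' h)).ne'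

theorem mutualInfo_crossEntropy_identity_general {γ α : Type*} [Fintype γ] [Fintype α]
    (p : γ × α × α → ℝ)
    (h0 : ∀ x, 0 ≤ p x)
    (pG : γ → ℝ)
    (pY : α → ℝ) (hpY : ∀ y, pY y = ∑ g, ∑ z, p (g, y, z))
    (pZ : α → ℝ) (hpZ : ∀ z, pZ z = ∑ g, ∑ y, p (g, y, z))
    (pGZ : γ → α → ℝ) (hpGZ : ∀ g z, pGZ g z = ∑ y, p (g, y, z))
    (pYZ : α → α → ℝ) (hpYZ : ∀ y z, pYZ y z = ∑ g, p (g, y, z))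
    (hsupp : ∀ y, 0 < pY y → 0 < pZ y)
    (LCE : ℝ) (hLCE : LCE = -∑ y, pY y * Real.log (pZ y)) :
    ((-∑ g, pG g * Real.log (pG g))
        - (-∑ g, ∑ z, pGZ g z * Real.log (pGZ g z / pZ z))
      = (-∑ g, pG g * Real.log (pG g)) - LCE
        + (∑ y, ∑ z, pYZ y z * Real.log (pYZ y z / (pY y * pZ z)))
        + (∑ y, pY y * Real.log (pY y / pZ y))
        + (-∑ g, ∑ y, ∑ z, p (g, y, z) * Real.log (p (g, y, z) / pGZ g z))
        - (-∑ g, ∑ y, ∑ z, p (g, y, z) * Real.log (p (g, y, z) / pYZ y z)))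
    ∧ (∀ L₁ L₂ : ℝ, L₁ < L₂ →
        (-∑ g, pG g * Real.log (pG g)) - L₂
          + (∑ y, ∑ z, pYZ y z * Real.log (pYZ y z / (pY y * pZ z)))
          + (∑ y, pY y * Real.log (pY y / pZ y))
          + (-∑ g, ∑ y, ∑ z, p (g, y, z) * Real.log (p (g, y, z) / pGZ g z))
          - (-∑ g, ∑ y, ∑ z, p (g, y, z) * Real.log (p (g, y, z) / pYZ y z))
        < (-∑ g, pG g * Real.log (pG g)) - L₁
          + (∑ y, ∑ z, pYZ y z * Real.log (pYZ y z / (pY y * pZ z)))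
          + (∑ y, pY y * Real.log (pY y / pZ y))
          + (-∑ g, ∑ y, ∑ z, p (g, y, z) * Real.log (p (g, y, z) / pGZ g z))
          - (-∑ g, ∑ y, ∑ z, p (g, y, z) * Real.log (p (g, y, z) / pYZ y z))) := by
  have hpGZ0 : ∀ g z, 0 ≤ pGZ g z := fun g z => hpGZ g z ▸ sum_nonneg fun _ _ => h0 _
  have hpYZ0 : ∀ y z, 0 ≤ pYZ y z := fun y z => hpYZ y z ▸ sum_nonneg fun _ _ => h0 _
  have hpY0 : ∀ y, 0 ≤ pY y := fun y => hpY y ▸ sum_nonneg fun _ _ => sum_nonneg fun _ _ => h0 _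
  have hZ_GZ : ∀ z, pZ z = ∑ g, pGZ g z := by simp [hpZ, hpGZ]
  have hZ_YZ : ∀ z, pZ z = ∑ y, pYZ y z := by simp [hpZ, hpYZ, sum_comm (γ := γ)]
  have hY_YZ : ∀ y, pY y = ∑ z, pYZ y z := by simp [hpY, hpYZ, sum_comm (γ := γ)]
  have hGZ : ∑ g, ∑ y, ∑ z, p (g, y, z) * log (p (g, y, z) / pGZ g z)
      = ∑ g, ∑ y, ∑ z, p (g, y, z) * log (p (g, y, z))
        - ∑ g, ∑ z, pGZ g z * log (pGZ g z) := by
    rw [← sum_sub_distrib]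
    exact sum_congr rfl fun g _ =>
      sum_sum_mul_log_div_of_marginal (fun y z => h0 (g, y, z)) (hpGZ g)
  have hYZ : ∑ g, ∑ y, ∑ z, p (g, y, z) * log (p (g, y, z) / pYZ y z)
      = ∑ g, ∑ y, ∑ z, p (g, y, z) * log (p (g, y, z))
        - ∑ y, ∑ z, pYZ y z * log (pYZ y z) := by
    simpa only [Fintype.sum_prod_type] using sum_sum_mul_log_div_of_marginal
      (f := fun g (x : α × α) => p (g, x)) (m := fun x => pYZ x.1 x.2)
      (fun g x => h0 (g, x)) (fun x => hpYZ x.1 x.2)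
  rw [sum_sum_mul_log_div_of_marginal hpGZ0 hZ_GZ,
    sum_sum_mul_log_div_mul_of_marginals hpYZ0 hY_YZ hZ_YZ, sum_mul_log_div_eq_sub hpY0 hsupp,
    hGZ, hYZ, hLCE]
  exact ⟨by ring, fun L₁ L₂ h => by linarith⟩

/-- I(G;Z) = H(G) - L_CE + D_KL(p_{YZ}‖p_Y p_Z) + D_KL(p_Y‖p_Z) + H(Y|G,Z) - H(G|Y,Z),
where Y and Z share a common finite alphabet; moreover, holding the other five terms
fixed, the right-hand side is strictly decreasing in L_CE. -/
theorem mutualInfo_crossEntropy_identity {γ α : Type*} [Fintype γ] [Fintype α]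
    (p : γ × α × α → ℝ)
    (h0 : ∀ x, 0 ≤ p x) (h1 : ∑ x, p x = 1)
    (pG : γ → ℝ) (hpG : ∀ g, pG g = ∑ y, ∑ z, p (g, y, z))
    (pY : α → ℝ) (hpY : ∀ y, pY y = ∑ g, ∑ z, p (g, y, z))
    (pZ : α → ℝ) (hpZ : ∀ z, pZ z = ∑ g, ∑ y, p (g, y, z))
    (pGZ : γ → α → ℝ) (hpGZ : ∀ g z, pGZ g z = ∑ y, p (g, y, z))
    (pYZ : α → α → ℝ) (hpYZ : ∀ y z, pYZ y z = ∑ g, p (g, y, z))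
    (hsupp : ∀ y, 0 < pY y → 0 < pZ y)
    (LCE : ℝ) (hLCE : LCE = -∑ y, pY y * Real.log (pZ y)) :
    ((-∑ g, pG g * Real.log (pG g))
        - (-∑ g, ∑ z, pGZ g z * Real.log (pGZ g z / pZ z))
      = (-∑ g, pG g * Real.log (pG g)) - LCE
        + (∑ y, ∑ z, pYZ y z * Real.log (pYZ y z / (pY y * pZ z)))
        + (∑ y, pY y * Real.log (pY y / pZ y))
        + (-∑ g, ∑ y, ∑ z, p (g, y, z) * Real.log (p (g, y, z) / pGZ g z))
        - (-∑ g, ∑ y, ∑ z, p (g, y, z) * Real.log (p (g, y, z) / pYZ y z)))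
    ∧ (∀ L₁ L₂ : ℝ, L₁ < L₂ →
        (-∑ g, pG g * Real.log (pG g)) - L₂
          + (∑ y, ∑ z, pYZ y z * Real.log (pYZ y z / (pY y * pZ z)))
          + (∑ y, pY y * Real.log (pY y / pZ y))
          + (-∑ g, ∑ y, ∑ z, p (g, y, z) * Real.log (p (g, y, z) / pGZ g z))
          - (-∑ g, ∑ y, ∑ z, p (g, y, z) * Real.log (p (g, y, z) / pYZ y z))
        < (-∑ g, pG g * Real.log (pG g)) - L₁
          + (∑ y, ∑ z, pYZ y z * Real.log (pYZ y z / (pY y * pZ z)))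
          + (∑ y, pY y * Real.log (pY y / pZ y))
          + (-∑ g, ∑ y, ∑ z, p (g, y, z) * Real.log (p (g, y, z) / pGZ g z))
          - (-∑ g, ∑ y, ∑ z, p (g, y, z) * Real.log (p (g, y, z) / pYZ y z))) :=
  mutualInfo_crossEntropy_identity_general p h0 pG pY hpY pZ hpZ pGZ hpGZ pYZ hpYZ hsupp LCE hLCE
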